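/- arXiv:2101.09219 — 5 statements merged into one kernel-verified Lean document; each statement's English description precedes it below -/
import Mathlib

section
/- For p₁ = 1 and p₂ = 3, the function (x₁, x₂, w₁, w₂) ↦ w₁·w₂·(x₁ - x₂)²·exp(6(x₁ + x₂)) subject to -1 ≤ x₁ ≤ x₂ ≤ 1, 0 ≤ w₁, w₂ and w₁ + w₂ = 1 attains its maximum value e¹⁰/36 at x₁ = 2/3, x₂ = 1, w₁ = w₂ = 1/2. -/
open Real

lemma exp_design_key (d : ℝ) (hd : 0 ≤ d) :
    d ^ 2 * Real.exp (12 - 6 * d) ≤ Real.exp 10 / 9 := by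
  have h1' : 3 * d ≤ Real.exp (3 * d - 1) := by
    linarith [Real.add_one_le_exp (3 * d - 1)]
  have hsq : (3 * d) ^ 2 ≤ Real.exp (6 * d - 2) := by
    have hE : Real.exp (6 * d - 2) = Real.exp (3 * d - 1) * Real.exp (3 * d - 1) := by
      rw [← Real.exp_add]; ring_nf
    nlinarith [hd, Real.exp_pos (3 * d - 1)]
  have hE2 : Real.exp (6 * d - 2) * Real.exp (12 - 6 * d) = Real.exp 10 := by
    rw [← Real.exp_add]; norm_num
  have hp := Real.exp_pos (12 - 6 * d)
  have hstep : 9 * (d ^ 2 * Real.exp (12 - 6 * d)) ≤ Real.exp 10 := by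
    calc 9 * (d ^ 2 * Real.exp (12 - 6 * d)) = (3 * d) ^ 2 * Real.exp (12 - 6 * d) := by ring
      _ ≤ Real.exp (6 * d - 2) * Real.exp (12 - 6 * d) :=
          mul_le_mul_of_nonneg_right hsq hp.le
      _ = Real.exp 10 := hE2
  linarith

theorem exp_design_max :
    (∀ x₁ x₂ w₁ w₂ : ℝ, -1 ≤ x₁ → x₁ ≤ x₂ → x₂ ≤ 1 → 0 ≤ w₁ → 0 ≤ w₂ → w₁ + w₂ = 1 →
      w₁ * w₂ * (x₁ - x₂) ^ 2 * Real.exp (6 * (x₁ + x₂)) ≤ Real.exp 10 / 36) ∧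
    (1 / 2 : ℝ) * (1 / 2) * ((2 / 3 : ℝ) - 1) ^ 2 * Real.exp (6 * ((2 / 3 : ℝ) + 1))
      = Real.exp 10 / 36 := by
  constructor
  · intro x₁ x₂ w₁ w₂ h1 h2 h3 hw1 hw2 hsum
    have hd : (0:ℝ) ≤ x₂ - x₁ := by linarith
    have key := exp_design_key (x₂ - x₁) hd
    have hww : w₁ * w₂ ≤ 1 / 4 := by nlinarith [sq_nonneg (w₁ - w₂)]
    have hx : Real.exp (6 * (x₁ + x₂)) ≤ Real.exp (12 - 6 * (x₂ - x₁)) := by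
      apply Real.exp_le_exp.mpr; linarith
    have hep := Real.exp_pos (6 * (x₁ + x₂))
    have hd2 : (x₁ - x₂) ^ 2 = (x₂ - x₁) ^ 2 := by ring
    have step1 : (x₁ - x₂) ^ 2 * Real.exp (6 * (x₁ + x₂)) ≤ Real.exp 10 / 9 := by
      rw [hd2]
      calc (x₂ - x₁) ^ 2 * Real.exp (6 * (x₁ + x₂))
          ≤ (x₂ - x₁) ^ 2 * Real.exp (12 - 6 * (x₂ - x₁)) :=
            mul_le_mul_of_nonneg_left hx (sq_nonneg _)
        _ ≤ Real.exp 10 / 9 := key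
    have hpos : 0 ≤ (x₁ - x₂) ^ 2 * Real.exp (6 * (x₁ + x₂)) :=
      mul_nonneg (sq_nonneg _) hep.le
    calc w₁ * w₂ * (x₁ - x₂) ^ 2 * Real.exp (6 * (x₁ + x₂))
        = (w₁ * w₂) * ((x₁ - x₂) ^ 2 * Real.exp (6 * (x₁ + x₂))) := by ring
      _ ≤ (1 / 4) * (Real.exp 10 / 9) := mul_le_mul hww step1 hpos (by norm_num)
      _ = Real.exp 10 / 36 := by ring
  · have h : (6 : ℝ) * ((2 / 3 : ℝ) + 1) = 10 := by norm_num
    rw [h]; ring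
end

section
/- For any real numbers x₁ ≤ x₂ in [-1,1] and weights w₁, w₂ ≥ 0 with w₁ + w₂ = 1, we have w₁·w₂·(x₁ - x₂)²·exp(6(x₁ + x₂)) ≤ exp(10)/36. -/
theorem exp_design_upper_bound (x₁ x₂ w₁ w₂ : ℝ)
    (h1 : -1 ≤ x₁) (h12 : x₁ ≤ x₂) (h2 : x₂ ≤ 1)
    (hw1 : 0 ≤ w₁) (hw2 : 0 ≤ w₂) (hw : w₁ + w₂ = 1) :
    w₁ * w₂ * (x₁ - x₂) ^ 2 * Real.exp (6 * (x₁ + x₂)) ≤ Real.exp 10 / 36 := by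
  have hw4 : w₁ * w₂ ≤ 1/4 := by nlinarith [sq_nonneg (w₁ - w₂)]
  obtain ⟨t, ht⟩ : ∃ t : ℝ, t = x₂ - x₁ := ⟨_, rfl⟩
  have ht0 : 0 ≤ t := by rw [ht]; linarith
  have h3t : 3 * t ≤ Real.exp (3 * t - 1) := by
    have := Real.add_one_le_exp (3 * t - 1); linarith
  have hsq : 9 * t ^ 2 ≤ Real.exp (6 * t - 2) := by
    have h : Real.exp (3*t-1) * Real.exp (3*t-1) = Real.exp (6*t-2) := by
      rw [← Real.exp_add]; ring_nf
    nlinarith [Real.exp_pos (3*t-1)]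
  have hmono : Real.exp (6 * (x₁ + x₂)) ≤ Real.exp (12 - 6 * t) := by
    apply Real.exp_le_exp.mpr; rw [ht]; linarith
  have key : t ^ 2 * Real.exp (12 - 6 * t) ≤ Real.exp 10 / 9 := by
    have hmul : Real.exp (6*t-2) * Real.exp (12 - 6*t) = Real.exp 10 := by
      rw [← Real.exp_add]; ring_nf
    have := mul_le_mul_of_nonneg_right hsq (Real.exp_pos (12 - 6*t)).le
    nlinarith [Real.exp_pos (12 - 6*t)]
  have hx2 : (x₁ - x₂)^2 = t^2 := by rw [ht]; ring
  have hfull : (x₁-x₂)^2 * Real.exp (6*(x₁+x₂)) ≤ Real.exp 10 / 9 := by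
    calc (x₁-x₂)^2 * Real.exp (6*(x₁+x₂)) ≤ t^2 * Real.exp (12-6*t) := by
          rw [hx2]; exact mul_le_mul_of_nonneg_left hmono (sq_nonneg t)
      _ ≤ Real.exp 10 / 9 := key
  nlinarith [sq_nonneg (x₁-x₂), Real.exp_pos (10:ℝ), mul_nonneg hw1 hw2,
    mul_nonneg (sq_nonneg (x₁-x₂)) (Real.exp_pos (6*(x₁+x₂))).le]
end

section
/- Under the symmetric weight constraint w₁ = w₂ = 1/2, the function (x₁, x₂) ↦ (x₁ - x₂)²·exp(6(x₁ + x₂)) on [-1,1]² is maximized at (x₁, x₂) ∈ {(2/3, 1), (1, 2/3)} with value 1/9·e¹⁰. -/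
/-- Key strict bound: if `s < 2` (or anyway `s ≤ 2`) and `s ≠ 5/3` then strict max. -/
lemma exp_design_aux (s : ℝ) (hs : s ≤ 2) :
    (2 - s) ^ 2 * Real.exp (6 * s) ≤ 1 / 9 * Real.exp 10 := by
  have h1 : 3 * (2 - s) ≤ Real.exp (3 * (2 - s) - 1) := by
    have := Real.add_one_le_exp (3 * (2 - s) - 1); linarith
  have h0 : (0:ℝ) ≤ 3 * (2 - s) := by linarith
  have h2 : (3 * (2 - s)) ^ 2 ≤ Real.exp (3 * (2 - s) - 1) ^ 2 :=
    pow_le_pow_left₀ h0 h1 2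
  have h3 : Real.exp (3 * (2 - s) - 1) ^ 2 * Real.exp (6 * s) = Real.exp 10 := by
    rw [← Real.exp_nat_mul, ← Real.exp_add]; ring_nf
  have hp := Real.exp_pos (6 * s)
  nlinarith [mul_le_mul_of_nonneg_right h2 hp.le]

lemma exp_design_aux_strict (s : ℝ) (hs : s ≤ 2) (hne : s ≠ 5/3) :
    (2 - s) ^ 2 * Real.exp (6 * s) < 1 / 9 * Real.exp 10 := by
  have hx : 3 * (2 - s) - 1 ≠ 0 := by
    intro h; apply hne; linarith
  have h1 : 3 * (2 - s) < Real.exp (3 * (2 - s) - 1) := by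
    have := Real.add_one_lt_exp hx; linarith
  have h0 : (0:ℝ) ≤ 3 * (2 - s) := by linarith
  have h2 : (3 * (2 - s)) ^ 2 < Real.exp (3 * (2 - s) - 1) ^ 2 :=
    pow_lt_pow_left₀ h1 h0 (by norm_num)
  have h3 : Real.exp (3 * (2 - s) - 1) ^ 2 * Real.exp (6 * s) = Real.exp 10 := by
    rw [← Real.exp_nat_mul, ← Real.exp_add]; ring_nf
  have hp := Real.exp_pos (6 * s)
  nlinarith [mul_lt_mul_of_pos_right h2 hp]

theorem exp_design_equal_weights_max
    (g : ℝ → ℝ → ℝ) (hg : ∀ x₁ x₂, g x₁ x₂ = (x₁ - x₂) ^ 2 * Real.exp (6 * (x₁ + x₂))) :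
    (∀ x₁ ∈ Set.Icc (-1 : ℝ) 1, ∀ x₂ ∈ Set.Icc (-1 : ℝ) 1,
        g x₁ x₂ ≤ 1 / 9 * Real.exp 10) ∧
    g (2 / 3) 1 = 1 / 9 * Real.exp 10 ∧
    g 1 (2 / 3) = 1 / 9 * Real.exp 10 ∧
    (∀ x₁ ∈ Set.Icc (-1 : ℝ) 1, ∀ x₂ ∈ Set.Icc (-1 : ℝ) 1,
        g x₁ x₂ = 1 / 9 * Real.exp 10 →
        (x₁, x₂) = ((2 / 3 : ℝ), (1 : ℝ)) ∨ (x₁, x₂) = ((1 : ℝ), (2 / 3 : ℝ))) := by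
  have hdiff : ∀ x₁ x₂ : ℝ, x₁ ≤ 1 → x₂ ≤ 1 →
      (x₁ - x₂) ^ 2 ≤ (2 - (x₁ + x₂)) ^ 2 := by
    intro x₁ x₂ h1 h2
    nlinarith [mul_nonneg (by linarith : (0:ℝ) ≤ 2 - 2*x₁) (by linarith : (0:ℝ) ≤ 2 - 2*x₂)]
  refine ⟨?_, ?_, ?_, ?_⟩
  · intro x₁ hx₁ x₂ hx₂
    rw [hg]
    have hs : x₁ + x₂ ≤ 2 := by linarith [hx₁.2, hx₂.2]
    calc (x₁ - x₂) ^ 2 * Real.exp (6 * (x₁ + x₂))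
        ≤ (2 - (x₁ + x₂)) ^ 2 * Real.exp (6 * (x₁ + x₂)) := by
          exact mul_le_mul_of_nonneg_right (hdiff x₁ x₂ hx₁.2 hx₂.2) (Real.exp_pos _).le
      _ ≤ 1 / 9 * Real.exp 10 := exp_design_aux _ hs
  · rw [hg, show (6:ℝ) * (2/3 + 1) = 10 by norm_num]; norm_num
  · rw [hg, show (6:ℝ) * (1 + 2/3) = 10 by norm_num]; norm_num
  · intro x₁ hx₁ x₂ hx₂ heq
    rw [hg] at heq
    have hs : x₁ + x₂ ≤ 2 := by linarith [hx₁.2, hx₂.2]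
    have hsum : x₁ + x₂ = 5/3 := by
      by_contra hne
      have h1 := mul_le_mul_of_nonneg_right (hdiff x₁ x₂ hx₁.2 hx₂.2)
        (Real.exp_pos (6 * (x₁ + x₂))).le
      have h2 := exp_design_aux_strict (x₁ + x₂) hs hne
      linarith
    rw [hsum, show (6:ℝ) * (5/3) = 10 by norm_num] at heq
    have hep := Real.exp_pos 10
    have hsq : (x₁ - x₂) ^ 2 = 1/9 := by
      have := mul_right_cancel₀ hep.ne' (by linarith [heq] : (x₁ - x₂) ^ 2 * Real.exp 10 = (1/9) * Real.exp 10)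
      linarith
    have : (x₁ - x₂ - 1/3) * (x₁ - x₂ + 1/3) = 0 := by nlinarith
    rcases mul_eq_zero.mp this with h | h
    · right; simp only [Prod.mk.injEq]; constructor <;> linarith
    · left; simp only [Prod.mk.injEq]; constructor <;> linarith
end

section
/- For the D-optimal design ξ* of the exponential example, the sensitivity function d(x, ξ*) = (18x²(e² + 1) - 12x(3e² + 2) + 2(9e² + 4))·e^{6x - 6} satisfies d(x, ξ*) ≤ 2 for all x ∈ [-1, 1]. -/
lemma mul_nonneg_of_nonpos_nonpos_aux {a b : ℝ} (ha : a ≤ 0) (hb : b ≤ 0) :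
    0 ≤ a * b := by nlinarith

theorem sensitivity_bounded_by_two (x : ℝ) (hx : x ∈ Set.Icc (-1 : ℝ) 1) :
    (18 * x ^ 2 * (Real.exp 2 + 1) - 12 * x * (3 * Real.exp 2 + 2)
        + 2 * (9 * Real.exp 2 + 4)) * Real.exp (6 * x - 6) ≤ 2 := by
  obtain ⟨h1, h2⟩ := hx
  set E := Real.exp 2 with hE
  have hE1 : 1 < E := by nlinarith [Real.add_one_le_exp (2:ℝ)]
  set r : ℝ := (3*E+1)/(3*(E+1)) with hr
  have hden : (0:ℝ) < 3*(E+1) := by linarith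
  have hr1 : 2/3 < r := by rw [hr, lt_div_iff₀ hden]; nlinarith
  have hr2 : r < 1 := by rw [hr, div_lt_one hden]; nlinarith
  set f : ℝ → ℝ := fun y => (18*y^2*(E+1) - 12*y*(3*E+2) + 2*(9*E+4)) * Real.exp (6*y)
    with hf
  have hder : ∀ y : ℝ, HasDerivAt f
      (108*(E+1)*Real.exp (6*y)*((y-2/3)*(y-r))) y := by
    intro y
    have hp : HasDerivAt (fun y : ℝ => 18*y^2*(E+1) - 12*y*(3*E+2) + 2*(9*E+4))
        (36*y*(E+1) - 12*(3*E+2)) y := by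
      have h := (((hasDerivAt_pow 2 y).const_mul (18:ℝ)).mul_const (E+1)).sub
        (((hasDerivAt_id y).const_mul (12:ℝ)).mul_const (3*E+2)) |>.add_const (2*(9*E+4))
      refine h.congr_deriv ?_; simp only [Nat.cast_ofNat, Nat.reduceSub]; ring
    have h6 : HasDerivAt (fun y : ℝ => 6*y) 6 y := by
      simpa using (hasDerivAt_id y).const_mul (6:ℝ)
    have he : HasDerivAt (fun y : ℝ => Real.exp (6*y)) (6*Real.exp (6*y)) y := by
      convert h6.exp using 1; ring
    have := hp.mul he
    refine this.congr_deriv ?_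
    rw [hr]
    field_simp
    ring
  have hcont : Continuous f := by
    apply Continuous.mul
    · continuity
    · exact Real.continuous_exp.comp (by continuity)
  have hdiff : Differentiable ℝ f := fun y => (hder y).differentiableAt
  have hf23 : f (2/3) = 2 * Real.exp 6 := by
    show (18*(2/3:ℝ)^2*(E+1) - 12*(2/3)*(3*E+2) + 2*(9*E+4)) * Real.exp (6*(2/3))
        = 2 * Real.exp 6
    have h4 : (6:ℝ)*(2/3) = 4 := by norm_num
    rw [h4, hE]
    have h6 : Real.exp 6 = Real.exp 2 * Real.exp 4 := by rw [← Real.exp_add]; norm_num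
    rw [h6]; ring
  have hf1 : f 1 = 2 * Real.exp 6 := by
    show (18*(1:ℝ)^2*(E+1) - 12*1*(3*E+2) + 2*(9*E+4)) * Real.exp (6*1) = 2 * Real.exp 6
    have : (18*(1:ℝ)^2*(E+1) - 12*1*(3*E+2) + 2*(9*E+4)) = 2 := by ring
    rw [this]; norm_num
  -- main bound: f x ≤ 2 * exp 6
  have key : f x ≤ 2 * Real.exp 6 := by
    rcases le_or_gt x (2/3) with hx1 | hx1
    · -- monotone on [-1, 2/3]
      have mono : MonotoneOn f (Set.Icc (-1:ℝ) (2/3)) := by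
        apply monotoneOn_of_deriv_nonneg (convex_Icc _ _) hcont.continuousOn
          (hdiff.differentiableOn)
        intro y hy
        rw [interior_Icc] at hy
        rw [(hder y).deriv]
        have hs : 0 ≤ (y-2/3)*(y-r) :=
          mul_nonneg_of_nonpos_nonpos_aux (by linarith [hy.2]) (by linarith [hy.2, hr1])
        have : (0:ℝ) ≤ 108*(E+1)*Real.exp (6*y) := by positivity
        nlinarith
      have := mono ⟨h1, hx1⟩ ⟨by norm_num, le_refl _⟩ hx1
      rw [hf23] at this; exact this
    · rcases le_or_gt x r with hx2 | hx2
      · -- antitone on [2/3, r]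
        have anti : AntitoneOn f (Set.Icc (2/3:ℝ) r) := by
          apply antitoneOn_of_deriv_nonpos (convex_Icc _ _) hcont.continuousOn
            (hdiff.differentiableOn)
          intro y hy
          rw [interior_Icc] at hy
          rw [(hder y).deriv]
          have hs : (y-2/3)*(y-r) ≤ 0 :=
            mul_nonpos_of_nonneg_of_nonpos (by linarith [hy.1]) (by linarith [hy.2])
          have : (0:ℝ) ≤ 108*(E+1)*Real.exp (6*y) := by positivity
          nlinarith
        have := anti ⟨le_refl _, le_of_lt hr1⟩ ⟨le_of_lt hx1, hx2⟩ (le_of_lt hx1)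
        rw [hf23] at this; exact this
      · -- monotone on [r, 1]
        have mono : MonotoneOn f (Set.Icc r (1:ℝ)) := by
          apply monotoneOn_of_deriv_nonneg (convex_Icc _ _) hcont.continuousOn
            (hdiff.differentiableOn)
          intro y hy
          rw [interior_Icc] at hy
          rw [(hder y).deriv]
          have hs : 0 ≤ (y-2/3)*(y-r) :=
            mul_nonneg (by linarith [hy.1, hr1]) (by linarith [hy.1])
          have : (0:ℝ) ≤ 108*(E+1)*Real.exp (6*y) := by positivity
          nlinarith
        have := mono ⟨le_of_lt hx2, h2⟩ ⟨le_of_lt hr2, le_refl _⟩ h2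
        rw [hf1] at this; exact this
  -- conclude
  have hexp : Real.exp (6*x-6) = Real.exp (6*x) * Real.exp (-6) := by
    rw [← Real.exp_add]; ring_nf
  calc (18 * x ^ 2 * (E + 1) - 12 * x * (3 * E + 2) + 2 * (9 * E + 4))
        * Real.exp (6 * x - 6)
      = f x * Real.exp (-6) := by rw [hexp, hf]; ring
    _ ≤ (2 * Real.exp 6) * Real.exp (-6) :=
        mul_le_mul_of_nonneg_right key (le_of_lt (Real.exp_pos _))
    _ = 2 := by rw [mul_assoc, ← Real.exp_add]; norm_num
end

section
/- Let ξ* be a design with information matrix I(ξ*) = ∑ᵢ wᵢ·μ(xᵢ*) (wᵢ > 0, ∑wᵢ = 1, I(ξ*) invertible). If the sensitivity function satisfies d(x, ξ*) = tr(I(ξ*)⁻¹μ(x)) ≤ P for all x ∈ D, then d(xᵢ*, ξ*) = P for every support point xᵢ* of ξ*. -/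
open Matrix

theorem sensitivity_equals_P_at_support {n P N : ℕ}
    (D : Set (Fin n → ℝ))
    (μ : (Fin n → ℝ) → Matrix (Fin P) (Fin P) ℝ)
    (hμ : ∀ x, (μ x).PosSemidef)
    (x : Fin N → (Fin n → ℝ)) (hxD : ∀ i, x i ∈ D)
    (w : Fin N → ℝ) (hw : ∀ i, 0 < w i) (hsum : ∑ i, w i = 1)
    (I : Matrix (Fin P) (Fin P) ℝ) (hI : I = ∑ i, w i • μ (x i))
    (hinv : IsUnit I.det)
    (hbound : ∀ y ∈ D, (I⁻¹ * μ y).trace ≤ P) :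
    ∀ i, (I⁻¹ * μ (x i)).trace = P := by
  have key : ∑ i, w i * (I⁻¹ * μ (x i)).trace = P := by
    have : ∑ i, w i * (I⁻¹ * μ (x i)).trace = (I⁻¹ * I).trace := by
      rw [hI, Matrix.mul_sum, Matrix.trace_sum]
      simp [Matrix.mul_smul, Matrix.trace_smul]
    rw [this, Matrix.nonsing_inv_mul I hinv, Matrix.trace_one]
    simp
  have hle : ∀ i ∈ Finset.univ, w i * (I⁻¹ * μ (x i)).trace ≤ w i * P := fun i _ =>
    mul_le_mul_of_nonneg_left (hbound _ (hxD i)) (hw i).le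
  have hsum2 : ∑ i, w i * (P : ℝ) = P := by
    rw [← Finset.sum_mul, hsum, one_mul]
  have heq := (Finset.sum_eq_sum_iff_of_le hle).mp (by rw [key, hsum2])
  intro i
  have := heq i (Finset.mem_univ i)
  exact mul_left_cancel₀ (hw i).ne' this
end
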